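/- arXiv:2009.10294 — 2 statements merged into one kernel-verified Lean document; each statement's English description precedes it below -/
import Mathlib

section
/- For all positive integers m ≤ n, the least number of edges of a graph with degree set {m, m+1, ..., n} is at least the least number of edges of a graph with degree set {1, 2, ..., n}. -/
/-- The degree set of a finite simple graph: the set of distinct vertex degrees. -/
def degreeSet {V : Type} [Fintype V] (G : SimpleGraph V) [DecidableRel G.Adj] : Finset ℕ :=
  Finset.univ.image (fun v => G.degree v)

/-- `lq D` is the least number of edges of a finite simple graph whose degree set is `D`. -/
noncomputable def lq (D : Finset ℕ) : ℕ :=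
  sInf {q | ∃ (p : ℕ) (G : SimpleGraph (Fin p)) (inst : DecidableRel G.Adj),
    @degreeSet _ _ G inst = D ∧
    (@SimpleGraph.edgeFinset _ G (@SimpleGraph.fintypeEdgeSet _ G _ inst)).card = q}

/-!
The threshold graph on `{0, …, n}` with `i ~ j ↔ i + j ≤ n` has degree set `{1, …, n}`; its
degrees are `1, …, n` with `⌈n/2⌉` repeated, so its degree sum is `n(n+1)/2 + ⌈n/2⌉`. It remains
to see that every graph with degree set `{m, …, n}` has at least this degree sum. Put
`t = ⌈n/2⌉`. If `t ≤ m`, one vertex of each degree plus the at least `m` further vertices, of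
degree at least `m`, already suffice. Otherwise let `A` be the set of vertices of degree at least
`t`. If `A` holds a second vertex of some degree, that vertex adds at least `t`. If not, `A` has
`n + 1 - t` vertices of degrees `t, …, n`, and double counting shows
`∑_{A} deg ≤ |A| (|A| - 1) + ∑_{Aᶜ} deg`: the edges inside `A` cannot supply these degrees, and
the vertices outside `A` must make up the difference.
-/

open Finset

theorem two_mul_sum_Ico_id {a b : ℕ} (hab : a ≤ b) :
    2 * ∑ k ∈ Ico a b, (k : ℤ) = b * (b - 1) - a * (a - 1) := by
  have hsplit := sum_range_add_sum_Ico (fun k => (k : ℤ)) hab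
  have hgauss (c : ℕ) : 2 * ∑ k ∈ range c, (k : ℤ) = c * (c - 1) := by
    rw [← Nat.cast_sum, ← Nat.cast_two, ← Nat.cast_mul, mul_comm, sum_range_id_mul_two]
    rcases c with _ | c <;> simp
  linear_combination 2 * hsplit + hgauss b - hgauss a

theorem sum_image_add_card_mul_le {α : Type*} (d : α → ℕ) (s : Finset α) {c : ℕ}
    (hc : ∀ a ∈ s, c ≤ d a) :
    ∑ k ∈ s.image d, k + #s * c ≤ ∑ a ∈ s, d a + #(s.image d) * c := by
  classical
  induction s using Finset.induction_on with
  | empty => simp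
  | insert a s ha ih =>
    have hca := hc a (mem_insert_self a s)
    have ih := ih fun b hb => hc b (mem_insert_of_mem hb)
    rw [image_insert, sum_insert ha, card_insert_of_notMem ha]
    by_cases hda : d a ∈ s.image d
    · rw [insert_eq_of_mem hda]
      linarith
    · rw [sum_insert hda, card_insert_of_notMem hda]
      linarith

namespace SimpleGraph

variable {V : Type*} [Fintype V] [DecidableEq V] (G : SimpleGraph V) [DecidableRel G.Adj]

theorem sum_degree_le_card_mul_add_sum_compl (A : Finset V) :
    ∑ v ∈ A, G.degree v ≤ #A * (#A - 1) + ∑ v ∈ Aᶜ, G.degree v := by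
  have hsplit (v : V) :
      G.degree v = #(A.bipartiteAbove G.Adj v) + #(Aᶜ.bipartiteAbove G.Adj v) := by
    rw [← card_neighborFinset_eq_degree, neighborFinset_eq_filter, bipartiteAbove, bipartiteAbove,
      ← card_union_of_disjoint (disjoint_filter_filter disjoint_compl_right), ← filter_union,
      union_compl]
  have hinside : ∀ v ∈ A, #(A.bipartiteAbove G.Adj v) ≤ #A - 1 := fun v hv => by
    rw [← card_erase_of_mem hv]
    exact card_le_card fun w hw => by
      rw [mem_bipartiteAbove] at hw
      exact mem_erase.2 ⟨(G.ne_of_adj hw.2).symm, hw.1⟩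
  have houtside : ∀ w ∈ Aᶜ, #(A.bipartiteBelow G.Adj w) ≤ G.degree w := fun w _ => by
    rw [← card_neighborFinset_eq_degree]
    exact card_le_card fun v hv => by
      rw [mem_bipartiteBelow] at hv
      exact (G.mem_neighborFinset w v).2 hv.2.symm
  calc ∑ v ∈ A, G.degree v
      = ∑ v ∈ A, #(A.bipartiteAbove G.Adj v) + ∑ v ∈ A, #(Aᶜ.bipartiteAbove G.Adj v) := by
        rw [← sum_add_distrib]; exact sum_congr rfl fun v _ => hsplit v
    _ = ∑ v ∈ A, #(A.bipartiteAbove G.Adj v) + ∑ w ∈ Aᶜ, #(A.bipartiteBelow G.Adj w) := by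
        rw [sum_card_bipartiteAbove_eq_sum_card_bipartiteBelow G.Adj (t := Aᶜ)]
    _ ≤ ∑ v ∈ A, (#A - 1) + ∑ w ∈ Aᶜ, G.degree w := by
        gcongr with v hv w hw
        · exact hinside v hv
        · exact houtside w hw
    _ = #A * (#A - 1) + ∑ v ∈ Aᶜ, G.degree v := by rw [sum_const, smul_eq_mul]

end SimpleGraph

def thresholdGraph (N k : ℕ) : SimpleGraph (Fin N) where
  Adj i j := i ≠ j ∧ (i : ℕ) + j < k
  symm := ⟨fun _ _ h => ⟨h.1.symm, by omega⟩⟩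
  loopless := ⟨fun _ h => h.1 rfl⟩

instance (N k : ℕ) : DecidableRel (thresholdGraph N k).Adj := fun i j =>
  inferInstanceAs (Decidable (i ≠ j ∧ (i : ℕ) + j < k))

theorem thresholdGraph_degree_add_ite (N k : ℕ) (i : Fin N) :
    (thresholdGraph N k).degree i + (if 2 * (i : ℕ) < k then 1 else 0) = min N (k - i) := by
  have hnbr : (thresholdGraph N k).neighborFinset i =
      ({j : Fin N | (j : ℕ) < k - i} : Finset (Fin N)).erase i := by
    ext j
    simp only [SimpleGraph.mem_neighborFinset, mem_erase, mem_filter, mem_univ, true_and]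
    change i ≠ j ∧ _ ↔ _
    omega
  rw [← SimpleGraph.card_neighborFinset_eq_degree, hnbr, ← Fin.card_filter_val_lt]
  split_ifs
  · exact card_erase_add_one (by simp; omega)
  · rw [erase_eq_of_notMem (by simp; omega), add_zero]

theorem thresholdGraph_degree (n m : ℕ) (i : Fin (n + 1)) :
    (thresholdGraph (n + 1) (n + m)).degree i =
      min (n + 1) (n + m - i) - if 2 * (i : ℕ) < n + m then 1 else 0 := by
  have := thresholdGraph_degree_add_ite (n + 1) (n + m) i
  omega

theorem degreeSet_thresholdGraph {m n : ℕ} (hm : 0 < m) (hmn : m ≤ n) :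
    degreeSet (thresholdGraph (n + 1) (n + m)) = Icc m n := by
  ext k
  simp only [degreeSet, mem_image, mem_univ, true_and, mem_Icc, thresholdGraph_degree]
  constructor
  · rintro ⟨i, rfl⟩
    have := i.isLt
    split_ifs <;> omega
  · rintro ⟨hmk, hkn⟩
    by_cases hk : n + m < 2 * k
    · exact ⟨⟨n + m - k - 1, by omega⟩, by simp only; split_ifs <;> omega⟩
    · exact ⟨⟨n + m - k, by omega⟩, by simp only; split_ifs <;> omega⟩

theorem two_mul_sum_degree_thresholdGraph (n : ℕ) :
    2 * ∑ i, (thresholdGraph (n + 1) (n + 1)).degree i = n * (n + 1) + 2 * ((n + 1) / 2) := by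
  have hsum := sum_congr rfl fun i (_ : i ∈ univ) =>
    thresholdGraph_degree_add_ite (n + 1) (n + 1) i
  rw [sum_add_distrib, sum_boole, Nat.cast_id] at hsum
  have hcount : #{i : Fin (n + 1) | 2 * (i : ℕ) < n + 1} = n / 2 + 1 := by
    rw [filter_congr (q := fun i : Fin (n + 1) => (i : ℕ) < n / 2 + 1) (fun i _ => by omega),
      Fin.card_filter_val_lt]
    omega
  have hmin : ∑ i : Fin (n + 1), min (n + 1) (n + 1 - i) + ∑ i : Fin (n + 1), (i : ℕ)
      = (n + 1) * (n + 1) := by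
    rw [← sum_add_distrib]
    calc _ = ∑ _i : Fin (n + 1), (n + 1) := sum_congr rfl fun i _ => by omega
      _ = _ := by simp
  have hid : ∑ i : Fin (n + 1), (i : ℕ) = ∑ i ∈ range (n + 1), i :=
    Fin.sum_univ_eq_sum_range (fun i => i) (n + 1)
  have hgauss : 2 * ∑ i ∈ range (n + 1), i = n * (n + 1) := by
    rw [mul_comm, sum_range_id_mul_two, Nat.add_sub_cancel, mul_comm]
  have hsq : (n + 1) * (n + 1) = n * (n + 1) + (n + 1) := by ring
  omega

section DegreeSet

variable {V : Type} [Fintype V] {G : SimpleGraph V} [DecidableRel G.Adj]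

theorem mem_degreeSet {k : ℕ} : k ∈ degreeSet G ↔ ∃ v, G.degree v = k := by
  simp [degreeSet]

theorem degree_mem_degreeSet (v : V) : G.degree v ∈ degreeSet G :=
  mem_degreeSet.2 ⟨v, rfl⟩

theorem lt_card_of_mem_degreeSet {k : ℕ} (hk : k ∈ degreeSet G) : k < Fintype.card V := by
  obtain ⟨v, rfl⟩ := mem_degreeSet.1 hk
  exact G.degree_lt_card_verts v

theorem image_degree_filter (p : ℕ → Prop) [DecidablePred p] :
    ({v | p (G.degree v)} : Finset V).image (G.degree ·) = (degreeSet G).filter p :=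
  filter_image.symm

theorem le_two_mul_sum_degree_of_lt [DecidableEq V] {m n : ℕ} (hG : degreeSet G = Icc m n)
    (hmt : m < (n + 1) / 2) :
    n * (n + 1) + 2 * ((n + 1) / 2) ≤ 2 * ∑ v, G.degree v := by
  set t := (n + 1) / 2
  set A : Finset V := {v | t ≤ G.degree v}
  have hAimg : A.image (G.degree ·) = Icc t n := by
    rw [image_degree_filter, hG]; ext; simp only [mem_filter, mem_Icc]; omega
  have hBimg : Aᶜ.image (G.degree ·) = Ico m t := by
    rw [compl_filter, image_degree_filter (¬ t ≤ ·), hG]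
    ext; simp only [mem_filter, mem_Icc, mem_Ico]; omega
  have hA := sum_image_add_card_mul_le (G.degree ·) A (c := t) fun v hv => (mem_filter.1 hv).2
  have hB := sum_image_add_card_mul_le (G.degree ·) Aᶜ (c := m) fun v _ =>
    (mem_Icc.1 (hG ▸ degree_mem_degreeSet v)).1
  rw [hAimg, Nat.card_Icc] at hA
  rw [hBimg, Nat.card_Ico] at hB
  have hAB := G.sum_degree_le_card_mul_add_sum_compl A
  have hsplit := sum_add_sum_compl A (G.degree ·)
  have hcard := card_add_card_compl A
  have hp : n + 1 ≤ Fintype.card V := lt_card_of_mem_degreeSet (by rw [hG]; simp; omega)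
  have ha : n + 1 - t ≤ #A := by rw [← Nat.card_Icc, ← hAimg]; exact card_image_le
  have hb : t - m ≤ #Aᶜ := by rw [← Nat.card_Ico, ← hBimg]; exact card_image_le
  have hhigh := two_mul_sum_Ico_id (a := t) (b := n + 1) (by omega)
  have hlow := two_mul_sum_Ico_id hmt.le
  rw [Ico_add_one_right_eq_Icc] at hhigh
  set a := #A
  set b := #Aᶜ
  zify [hmt.le, (by omega : t ≤ n + 1), (by omega : 1 ≤ a)] at *
  rw [← hsplit]
  rcases ha.eq_or_lt with ha | ha
  · -- `A` has one vertex of each degree `t, …, n`; the bound reduces to `htight`.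
    have htight : (0 : ℤ) ≤ (2 * t - n) * (n + 1 - 2 * t) :=
      mul_nonneg (by omega) (by omega)
    nlinarith
  · have hextra : (0 : ℤ) ≤ (a - (n + 1 - t) - 1) * (t - m) := mul_nonneg (by omega) (by omega)
    have hmany : (0 : ℤ) ≤ m * (a + b - (n + 1)) := mul_nonneg (by omega) (by omega)
    nlinarith [Int.le_self_sq (m : ℤ)]

theorem le_two_mul_sum_degree_of_le {m n : ℕ} (hG : degreeSet G = Icc m n) (hmn : m ≤ n)
    (htm : (n + 1) / 2 ≤ m) :
    n * (n + 1) + 2 * ((n + 1) / 2) ≤ 2 * ∑ v, G.degree v := by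
  have hsum := sum_image_add_card_mul_le (G.degree ·) univ (c := m) fun v _ =>
    (mem_Icc.1 (hG ▸ degree_mem_degreeSet v)).1
  change ∑ k ∈ degreeSet G, k + _ ≤ _ + #(degreeSet G) * m at hsum
  rw [hG, Nat.card_Icc, card_univ] at hsum
  have hp : n + 1 ≤ Fintype.card V := lt_card_of_mem_degreeSet (by rw [hG]; simp; omega)
  have hgauss := two_mul_sum_Ico_id (a := m) (b := n + 1) (by omega)
  rw [Ico_add_one_right_eq_Icc] at hgauss
  zify [(by omega : m ≤ n + 1)] at *
  nlinarith [Int.le_self_sq (m : ℤ)]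

theorem le_two_mul_sum_degree [DecidableEq V] {m n : ℕ} (hG : degreeSet G = Icc m n)
    (hmn : m ≤ n) :
    n * (n + 1) + 2 * ((n + 1) / 2) ≤ 2 * ∑ v, G.degree v := by
  rcases lt_or_ge m ((n + 1) / 2) with hmt | htm
  · exact le_two_mul_sum_degree_of_lt hG hmt
  · exact le_two_mul_sum_degree_of_le hG hmn htm

end DegreeSet

theorem lq_le_card_edgeFinset {D : Finset ℕ} {p : ℕ} (G : SimpleGraph (Fin p))
    [DecidableRel G.Adj] (hG : degreeSet G = D) : lq D ≤ #G.edgeFinset :=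
  Nat.sInf_le ⟨p, G, _, hG, rfl⟩

theorem exists_card_edgeFinset_eq_lq {D : Finset ℕ} {p : ℕ} (G : SimpleGraph (Fin p))
    [DecidableRel G.Adj] (hG : degreeSet G = D) :
    ∃ (q : ℕ) (H : SimpleGraph (Fin q)) (_ : DecidableRel H.Adj),
      degreeSet H = D ∧ #H.edgeFinset = lq D :=
  Nat.sInf_mem (s := {q | ∃ (p : ℕ) (G : SimpleGraph (Fin p)) (_ : DecidableRel G.Adj),
    degreeSet G = D ∧ #G.edgeFinset = q}) ⟨_, p, G, _, hG, rfl⟩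

/-- For `1 ≤ m ≤ n`, the least size of a graph with degree set `{m, …, n}` is at
least the least size of a graph with degree set `{1, …, n}`. -/
theorem lq_interval_mono (m n : ℕ) (hm : 0 < m) (hmn : m ≤ n) :
    lq (Finset.Icc 1 n) ≤ lq (Finset.Icc m n) := by
  obtain ⟨p, G, _, hG, hq⟩ :=
    exists_card_edgeFinset_eq_lq _ (degreeSet_thresholdGraph hm hmn)
  have hlow := le_two_mul_sum_degree hG hmn
  have hup := two_mul_sum_degree_thresholdGraph n
  rw [SimpleGraph.sum_degrees_eq_twice_card_edges] at hlow hup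
  calc lq (Icc 1 n) ≤ #(thresholdGraph (n + 1) (n + 1)).edgeFinset :=
        lq_le_card_edgeFinset _ (degreeSet_thresholdGraph Nat.one_pos (hm.trans_le hmn))
    _ ≤ #G.edgeFinset := by omega
    _ = lq (Icc m n) := hq
end

section
/- Let G be a finite simple graph with at least three vertices of some odd degree d ≥ 3, among them distinct vertices x and y. Then there exists a finite simple graph G' with |E(G')| = |E(G)| and the same degree set as G, in which the number of vertices of degree d is two less than in G, the count of degree-2 vertices increases, and the counts of vertices of every degree other than 2 and d are unchanged, provided 2 is in the degree set of G. -/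
/-!
Delete `x` and `y` and add `d` new vertices, joined to the rest of the graph so that every old
vertex gets back as many edges as it had to `x` and `y` and every new vertex has degree `2`. The
degree multiset then changes from `M + {d, d}` to `M + {2, …, 2}` (`d` copies), which gives all
the claims at once; the edge count, half the degree sum, is unchanged because `2·d = d·2`.

To join the new vertices, list the neighbours of `x` and of `y` other than `x, y` with
multiplicity, in sorted order. A vertex occurs at most twice, so entries two or more places apart
differ; joining entry `i` to new vertex `i mod d` therefore gives each new vertex two distinct
neighbours, `d ≥ 2` places apart.
-/

open Finset Sum

theorem Nat.mod_eq_iff_eq_or_eq_add {i j d : ℕ} (hi : i < 2 * d) (hj : j < d) :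
    i % d = j ↔ i = j ∨ i = j + d := by
  have hdiv := Nat.div_add_mod i d
  have hmod := Nat.mod_lt i (show 0 < d by omega)
  have hq : i / d < 2 := Nat.div_lt_of_lt_mul (by linarith)
  interval_cases i / d <;> omega

theorem Nat.add_le_of_mod_eq_of_lt {a b d : ℕ} (h : a % d = b % d) (hab : a < b) : a + d ≤ b := by
  have := Nat.le_of_dvd (by omega) (Nat.dvd_of_mod_eq_zero (Nat.sub_mod_eq_zero_of_mod_eq h.symm))
  omega

theorem Fin.card_filter_val_mod_eq {m d j : ℕ} (hm : m ≤ 2 * d) (hj : j < d) :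
    #{i : Fin m | (i : ℕ) % d = j} = #{i ∈ ({j, j + d} : Finset ℕ) | i < m} := by
  rw [← card_map Fin.valEmbedding]
  congr 1
  ext i
  simp only [mem_map, Fin.valEmbedding_apply, mem_filter, mem_univ, true_and, mem_insert,
    mem_singleton]
  constructor
  · rintro ⟨i, hi, rfl⟩
    exact ⟨(Nat.mod_eq_iff_eq_or_eq_add (by omega) hj).mp hi, i.2⟩
  · rintro ⟨hi, hm⟩
    exact ⟨⟨i, hm⟩, (Nat.mod_eq_iff_eq_or_eq_add (by omega) hj).mpr hi, rfl⟩

theorem Multiset.count_map_univ {ι α : Type*} [Fintype ι] [DecidableEq α] (f : ι → α) (a : α) :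
    (univ.val.map f).count a = #{i | f i = a} := by
  rw [Multiset.count_map]; simp only [eq_comm]; rfl

theorem Multiset.toFinset_eq_of_add_replicate_eq {α : Type*} [DecidableEq α] {M M' : Multiset α}
    {a b : α} {n k : ℕ} (h : M' + replicate n a = M + replicate k b) (ha : a ∈ M') (hb : b ∈ M) :
    M'.toFinset = M.toFinset := by
  ext x
  have hx : x ∈ M' + replicate n a ↔ x ∈ M + replicate k b := by rw [h]
  simp only [mem_add, mem_replicate] at hx
  simp only [mem_toFinset]
  constructor
  · intro h'; rcases hx.mp (Or.inl h') with h' | ⟨-, rfl⟩ <;> assumption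
  · intro h'; rcases hx.mpr (Or.inl h') with h' | ⟨-, rfl⟩ <;> assumption

theorem Multiset.exists_fin_map_eq_forall_ne_of_count_le_two {α : Type*} [DecidableEq α]
    (s : Multiset α) (hs : ∀ a, s.count a ≤ 2) {n : ℕ} (hn : card s = n) :
    ∃ f : Fin n → α, univ.val.map f = s ∧ ∀ i j : Fin n, (i : ℕ) + 2 ≤ j → f i ≠ f j := by
  let : LinearOrder α := IsWellOrder.linearOrder WellOrderingRel
  set l := s.sort (· ≤ ·)
  have hl : l.length = n := by rw [Multiset.length_sort, hn]
  let f : Fin n → α := fun i => l[i.cast hl.symm]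
  have hf : univ.val.map f = s := by
    rw [Fin.univ_val_map, ← Multiset.sort_eq s (· ≤ ·)]
    exact congrArg _ (List.ext_getElem (by simp [hn]) fun k _ _ => by simp [f, l])
  refine ⟨f, hf, fun i j hij hfij => ?_⟩
  -- `f` is monotone, so `f i = f j` forces `f (i + 1)` to be a third copy of `f i`
  have hmono : Monotone f := fun a b hab =>
    (Multiset.pairwise_sort s (· ≤ ·)).rel_get_of_le (a := a.cast hl.symm) (b := b.cast hl.symm) hab
  let i' : Fin n := ⟨i + 1, by omega⟩
  have hi' : f i' = f i :=
    le_antisymm (hfij ▸ hmono (Fin.mk_le_mk.mpr (by omega))) (hmono (Fin.mk_le_mk.mpr (by omega)))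
  have hle : #{k | f k = f i} ≤ 2 := by
    rw [← Multiset.count_map_univ, hf]
    exact hs (f i)
  have hge : #{i, i', j} ≤ #{k | f k = f i} := Finset.card_le_card fun k hk => by
    simp only [Finset.mem_insert, Finset.mem_singleton] at hk
    rcases hk with rfl | rfl | rfl <;> simp [hi', hfij]
  rw [Finset.card_eq_three.mpr ⟨i, i', j, Fin.ne_of_val_ne (by dsimp [i']; omega),
    Fin.ne_of_val_ne (by omega), Fin.ne_of_val_ne (by dsimp [i']; omega), rfl⟩] at hge
  omega

section EdgeList

variable {ι α β : Type*} [Fintype ι] [DecidableEq α] [DecidableEq β] {f : ι → α} {g : ι → β}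
  {r : α → β → Prop} [DecidableRel r]

theorem card_filter_eq_card_fiber_left [Fintype β]
    (hr : ∀ a b, r a b ↔ ∃ i, f i = a ∧ g i = b) (hfg : Function.Injective fun i => (f i, g i))
    (a : α) : #{b | r a b} = #{i | f i = a} := by
  rw [← card_image_of_injOn (f := g) fun i hi i' hi' h =>
    hfg (Prod.ext ((mem_filter.mp hi).2.trans (mem_filter.mp hi').2.symm) h)]
  congr 1; ext; simp [hr]

theorem card_filter_eq_card_fiber_right [Fintype α]
    (hr : ∀ a b, r a b ↔ ∃ i, f i = a ∧ g i = b) (hfg : Function.Injective fun i => (f i, g i))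
    (b : β) : #{a | r a b} = #{i | g i = b} :=
  letI : DecidableRel (flip r) := fun b a => inferInstanceAs (Decidable (r a b))
  card_filter_eq_card_fiber_left (r := flip r) (fun b a => by simp [flip, hr, and_comm])
    (fun i i' h => hfg (Prod.ext_iff.mpr (Prod.ext_iff.mp h).symm)) b

end EdgeList

namespace SimpleGraph

section SumAlong

variable {α β : Type*} (G : SimpleGraph α) (H : SimpleGraph β) (r : α → β → Prop)

def sumAlong : SimpleGraph (α ⊕ β) where
  Adj
    | inl a, inl a' => G.Adj a a'
    | inr b, inr b' => H.Adj b b'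
    | inl a, inr b | inr b, inl a => r a b
  symm.symm
    | inl _, inl _ => G.adj_symm
    | inr _, inr _ => H.adj_symm
    | inl _, inr _ | inr _, inl _ => id
  loopless.irrefl
    | inl a => G.loopless.irrefl a
    | inr b => H.loopless.irrefl b

instance [DecidableRel G.Adj] [DecidableRel H.Adj] [DecidableRel r] :
    DecidableRel (G.sumAlong H r).Adj
  | inl a, inl a' => inferInstanceAs (Decidable (G.Adj a a'))
  | inr b, inr b' => inferInstanceAs (Decidable (H.Adj b b'))
  | inl a, inr b => inferInstanceAs (Decidable (r a b))
  | inr b, inl a => inferInstanceAs (Decidable (r a b))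

variable [Fintype α] [Fintype β] [DecidableRel G.Adj] [DecidableRel H.Adj] [DecidableRel r]

theorem degree_sumAlong_inl (a : α) :
    (G.sumAlong H r).degree (inl a) = G.degree a + #{b | r a b} := by
  rw [← card_neighborFinset_eq_degree, ← card_neighborFinset_eq_degree, ← card_disjSum]
  congr 1
  ext (a' | b) <;> simp only [mem_neighborFinset, inl_mem_disjSum, inr_mem_disjSum,
    mem_filter, mem_univ, true_and] <;> rfl

theorem degree_sumAlong_inr (b : β) :
    (G.sumAlong H r).degree (inr b) = H.degree b + #{a | r a b} := by
  rw [← card_neighborFinset_eq_degree, ← card_neighborFinset_eq_degree, add_comm,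
    ← card_disjSum]
  congr 1
  ext (a | b') <;> simp only [mem_neighborFinset, inl_mem_disjSum, inr_mem_disjSum,
    mem_filter, mem_univ, true_and] <;> rfl

end SumAlong

section DegreeMultiset

variable {V W : Type*} [Fintype V] (G : SimpleGraph V) [DecidableRel G.Adj]

def degreeMultiset : Multiset ℕ := univ.val.map fun v => G.degree v

theorem count_degreeMultiset (k : ℕ) : G.degreeMultiset.count k = #{v | G.degree v = k} :=
  Multiset.count_map_univ _ k

theorem sum_degreeMultiset : G.degreeMultiset.sum = 2 * #G.edgeFinset :=
  G.sum_degrees_eq_twice_card_edges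

theorem Iso.degreeMultiset_eq [Fintype W] {G' : SimpleGraph W} [DecidableRel G'.Adj]
    (φ : G ≃g G') : G.degreeMultiset = G'.degreeMultiset := by
  rw [degreeMultiset, degreeMultiset, ← Multiset.map_univ_val_equiv φ.toEquiv, Multiset.map_map]
  exact congrArg (Multiset.map · _) (funext fun v => (φ.degree_eq v).symm)

theorem exists_fin_degreeMultiset_eq :
    ∃ (G' : SimpleGraph (Fin (Fintype.card V))) (_ : DecidableRel G'.Adj),
      G'.degreeMultiset = G.degreeMultiset := by
  classical
  exact ⟨_, inferInstance, (Iso.degreeMultiset_eq G (Iso.map (Fintype.equivFin V) G)).symm⟩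

theorem degreeMultiset_eq_map_subtype_add_map_compl (s : Set V) [DecidablePred (· ∈ s)] :
    G.degreeMultiset = (univ.val.map fun v : s => G.degree v) +
      ({v | v ∉ s} : Finset V).val.map fun v => G.degree v := by
  rw [degreeMultiset, ← Multiset.filter_add_not (· ∈ s) univ.val, Multiset.map_add]
  congr 1
  exact (univ_val_map_subtype_restrict _ (· ∈ s)).symm

theorem degreeMultiset_eq_map_inl_add_map_inr {α β : Type*} [Fintype α] [Fintype β]
    (G : SimpleGraph (α ⊕ β)) [DecidableRel G.Adj] :
    G.degreeMultiset =
      univ.val.map (fun a => G.degree (inl a)) + univ.val.map fun b => G.degree (inr b) := by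
  rw [degreeMultiset, ← univ_disjSum_univ]
  exact (Multiset.map_add _ _ _).trans (by rw [Multiset.map_map, Multiset.map_map]; rfl)

end DegreeMultiset

theorem degree_edge {V : Type*} [Fintype V] [DecidableEq V] {s t : V} (hst : s ≠ t) (v : V) :
    (edge s t).degree v = if v = s ∨ v = t then 1 else 0 := by
  rw [← card_neighborFinset_eq_degree]
  split_ifs with hv
  · rw [card_eq_one]
    rcases hv with rfl | rfl
    · exact ⟨t, by ext; grind [mem_neighborFinset]⟩
    · exact ⟨s, by ext; grind [mem_neighborFinset]⟩
  · rw [card_eq_zero]; ext; grind [mem_neighborFinset]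

section Merge

variable {V : Type*} [Fintype V] (G : SimpleGraph V) [DecidableRel G.Adj]

theorem card_filter_adj_add_card_filter_notMem (s : Set V) [DecidablePred (· ∈ s)] (v : V) :
    #{w : s | G.Adj v w} + #{u ∈ G.neighborFinset v | u ∉ s} = G.degree v := by
  rw [← card_neighborFinset_eq_degree, ← card_map (Function.Embedding.subtype _)]
  convert card_filter_add_card_filter_not (s := G.neighborFinset v) (· ∈ s) using 3
  ext u; simp

theorem degree_induce_eq_card_filter_adj (s : Set V) [DecidablePred (· ∈ s)] (v : s) :
    (G.induce s).degree v = #{w : s | G.Adj v w} := by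
  rw [← card_neighborFinset_eq_degree]; congr 1; ext; simp

variable [DecidableEq V]

def pairNeighborMultiset (x y : V) : Multiset ↥({x, y} : Set V)ᶜ :=
  (univ.filter fun w : ↥({x, y} : Set V)ᶜ => G.Adj x w).val +
    (univ.filter fun w : ↥({x, y} : Set V)ᶜ => G.Adj y w).val

theorem count_pairNeighborMultiset {x y : V} (w : ↥({x, y} : Set V)ᶜ) :
    (G.pairNeighborMultiset x y).count w =
      (if G.Adj x w then 1 else 0) + (if G.Adj y w then 1 else 0) := by
  simp [pairNeighborMultiset, Multiset.count_filter]

theorem degree_eq_card_filter_adj_compl_pair_add {x y : V} (hxy : x ≠ y) (v : V) :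
    G.degree v = #{w : ↥({x, y} : Set V)ᶜ | G.Adj v w} +
      ((if G.Adj x v then 1 else 0) + (if G.Adj y v then 1 else 0)) := by
  rw [← card_filter_adj_add_card_filter_notMem G ({x, y} : Set V)ᶜ v]
  congr 1
  simp only [Set.mem_compl_iff, Set.mem_insert_iff, Set.mem_singleton_iff, not_not]
  rw [filter_or, card_union_of_disjoint (disjoint_filter.mpr fun _ _ h => h ▸ hxy), filter_eq',
    filter_eq']
  simp [apply_ite card, G.adj_comm v]

theorem card_pairNeighborMultiset {x y : V} (hxy : x ≠ y) {d : ℕ} (hx : G.degree x = d)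
    (hy : G.degree y = d) :
    Multiset.card (G.pairNeighborMultiset x y) + 2 * (if G.Adj x y then 1 else 0) = 2 * d := by
  have hdx := G.degree_eq_card_filter_adj_compl_pair_add hxy x
  have hdy := G.degree_eq_card_filter_adj_compl_pair_add hxy y
  simp only [G.irrefl, G.adj_comm y x, if_false] at hdx hdy
  rw [pairNeighborMultiset, Multiset.card_add, card_val, card_val]
  split_ifs at * <;> omega

/-- New vertex `j` is joined to the entries `i ≡ j (mod d)` of the listing of
`pairNeighborMultiset` and to its `H`-neighbours, so `hH` says that it gets degree `2`. -/
theorem exists_degreeMultiset_merge_of_gadget {x y : V} (hxy : x ≠ y) {d m : ℕ} (hd : 2 ≤ d)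
    (hx : G.degree x = d) (hy : G.degree y = d) (H : SimpleGraph (Fin d)) [DecidableRel H.Adj]
    (hm : Multiset.card (G.pairNeighborMultiset x y) = m)
    (hH : ∀ j : Fin d, H.degree j + #{i : Fin m | (i : ℕ) % d = j} = 2) :
    ∃ (p : ℕ) (G' : SimpleGraph (Fin p)) (_ : DecidableRel G'.Adj),
      G'.degreeMultiset + Multiset.replicate 2 d = G.degreeMultiset + Multiset.replicate d 2 := by
  obtain ⟨f, hf, hspread⟩ :=
    (G.pairNeighborMultiset x y).exists_fin_map_eq_forall_ne_of_count_le_two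
      (fun w => by rw [count_pairNeighborMultiset]; split_ifs <;> omega) hm
  let slot (i : Fin m) : Fin d := ⟨i % d, Nat.mod_lt _ (by omega)⟩
  have hinj : Function.Injective fun i => (f i, slot i) := by
    intro i i' h
    simp only [Prod.mk.injEq, slot, Fin.ext_iff] at h
    by_contra hne
    rcases Fin.lt_or_lt_of_ne hne with hlt | hlt
    · exact hspread i i' (by have := Nat.add_le_of_mod_eq_of_lt h.2 hlt; omega) h.1
    · exact hspread i' i (by have := Nat.add_le_of_mod_eq_of_lt h.2.symm hlt; omega) h.1.symm
  let G' := (G.induce ({x, y} : Set V)ᶜ).sumAlong H fun w j => ∃ i, f i = w ∧ slot i = j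
  have hold (w : ↥({x, y} : Set V)ᶜ) : G'.degree (inl w) = G.degree w := by
    rw [degree_sumAlong_inl, card_filter_eq_card_fiber_left (fun _ _ => Iff.rfl) hinj,
      degree_induce_eq_card_filter_adj, G.degree_eq_card_filter_adj_compl_pair_add hxy,
      ← count_pairNeighborMultiset, ← hf, Multiset.count_map_univ]
  have hnew (j : Fin d) : G'.degree (inr j) = 2 := by
    rw [degree_sumAlong_inr, card_filter_eq_card_fiber_right (fun _ _ => Iff.rfl) hinj, ← hH j]
    simp [slot, Fin.ext_iff]
  have hpair : ({v | v ∉ ({x, y} : Set V)ᶜ} : Finset V) = {x, y} := by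
    ext
    simp only [mem_filter, mem_univ, true_and, Set.mem_compl_iff, not_not, Set.mem_insert_iff,
      Set.mem_singleton_iff, mem_insert, mem_singleton]
  have hxyd : ({x, y} : Finset V).val.map (fun v => G.degree v) = Multiset.replicate 2 d :=
    Multiset.eq_replicate.mpr ⟨by rw [Multiset.card_map, card_val, card_pair hxy], by simp [hx, hy]⟩
  obtain ⟨G'', inst, hG''⟩ := G'.exists_fin_degreeMultiset_eq
  refine ⟨_, G'', inst, ?_⟩
  rw [hG'', degreeMultiset_eq_map_inl_add_map_inr,
    degreeMultiset_eq_map_subtype_add_map_compl G ({x, y} : Set V)ᶜ]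
  simp only [hold, hnew, Multiset.map_const', card_val, card_univ, Fintype.card_fin, hpair, hxyd]
  rw [add_right_comm]

theorem exists_degreeMultiset_merge {x y : V} (hxy : x ≠ y) {d : ℕ} (hd : 2 ≤ d)
    (hx : G.degree x = d) (hy : G.degree y = d) :
    ∃ (p : ℕ) (G' : SimpleGraph (Fin p)) (_ : DecidableRel G'.Adj),
      G'.degreeMultiset + Multiset.replicate 2 d = G.degreeMultiset + Multiset.replicate d 2 := by
  have hcard := G.card_pairNeighborMultiset hxy hx hy
  by_cases hadj : G.Adj x y
  · -- `2d - 2` entries: new vertices `d - 2` and `d - 1` get one each, and an edge between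
    -- them takes the place of `xy`
    refine G.exists_degreeMultiset_merge_of_gadget hxy hd hx hy
      (edge ⟨d - 2, by omega⟩ ⟨d - 1, by omega⟩) (m := 2 * d - 2)
      (by simp only [hadj, if_true] at hcard; omega) fun j => ?_
    have hj := j.2
    rw [degree_edge (Fin.ne_of_val_ne (by dsimp; omega)), Fin.card_filter_val_mod_eq (by omega) hj,
      filter_insert, filter_singleton, if_pos (show (j : ℕ) < 2 * d - 2 by omega)]
    by_cases hjd : (j : ℕ) < d - 2
    · rw [if_neg (by simp only [Fin.ext_iff]; omega), if_pos (by omega), card_pair (by omega)]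
    · rw [if_pos (by simp only [Fin.ext_iff]; omega), if_neg (by omega), insert_empty,
        card_singleton]
  · refine G.exists_degreeMultiset_merge_of_gadget hxy hd hx hy ⊥ (m := 2 * d)
      (by simpa [hadj] using hcard) fun j => ?_
    rw [bot_degree, Fin.card_filter_val_mod_eq le_rfl j.2, filter_true_of_mem, card_pair (by omega)]
    simp only [mem_insert, mem_singleton, forall_eq_or_imp, forall_eq]
    omega

end Merge

end SimpleGraph

theorem merge_odd_degree_vertices_general {V : Type} [Fintype V] [DecidableEq V]
    (G : SimpleGraph V) [DecidableRel G.Adj] (d : ℕ) (hd3 : 3 ≤ d)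
    (hcount : 3 ≤ (Finset.univ.filter fun v => G.degree v = d).card)
    (x y : V) (hxy : x ≠ y) (hx : G.degree x = d) (hy : G.degree y = d)
    (h2 : 2 ∈ Finset.univ.image (fun v => G.degree v)) :
    ∃ (p : ℕ) (G' : SimpleGraph (Fin p)) (inst : DecidableRel G'.Adj),
      (@SimpleGraph.edgeFinset _ G' (@SimpleGraph.fintypeEdgeSet _ G' _ inst)).card
        = G.edgeFinset.card ∧
      Finset.univ.image (fun v => @SimpleGraph.degree _ G' v
        (@SimpleGraph.neighborSetFintype _ G' _ inst v))
        = Finset.univ.image (fun v => G.degree v) ∧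
      (Finset.univ.filter fun v => @SimpleGraph.degree _ G' v
          (@SimpleGraph.neighborSetFintype _ G' _ inst v) = d).card
        = (Finset.univ.filter fun v => G.degree v = d).card - 2 ∧
      (Finset.univ.filter fun v => G.degree v = 2).card
        < (Finset.univ.filter fun v => @SimpleGraph.degree _ G' v
            (@SimpleGraph.neighborSetFintype _ G' _ inst v) = 2).card ∧
      ∀ e : ℕ, e ≠ 2 → e ≠ d →
        (Finset.univ.filter fun v => @SimpleGraph.degree _ G' v
            (@SimpleGraph.neighborSetFintype _ G' _ inst v) = e).card
          = (Finset.univ.filter fun v => G.degree v = e).card := by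
  obtain ⟨p, G', inst, hG'⟩ := G.exists_degreeMultiset_merge hxy (by omega) hx hy
  have hmult (e : ℕ) : #{v | G'.degree v = e} + (if d = e then 2 else 0) =
      #{v | G.degree v = e} + (if 2 = e then d else 0) := by
    have := congrArg (Multiset.count e) hG'
    rwa [Multiset.count_add, Multiset.count_add, SimpleGraph.count_degreeMultiset,
      SimpleGraph.count_degreeMultiset, Multiset.count_replicate, Multiset.count_replicate] at this
  have hcount_d := hmult d
  have hcount_2 := hmult 2
  simp only [if_true, show d ≠ 2 by omega, show 2 ≠ d by omega, if_false] at hcount_d hcount_2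
  refine ⟨p, G', inst, ?_, ?_, by omega, by omega, fun e he2 hed => by
    simpa [he2.symm, hed.symm] using hmult e⟩
  · have := congrArg Multiset.sum hG'
    simp only [Multiset.sum_add, SimpleGraph.sum_degreeMultiset, Multiset.sum_replicate,
      smul_eq_mul] at this
    omega
  · have hd : d ∈ G'.degreeMultiset := by
      rw [← Multiset.count_pos, SimpleGraph.count_degreeMultiset]
      omega
    exact Multiset.toFinset_eq_of_add_replicate_eq hG' hd (Multiset.mem_toFinset.mp h2)

/-- The merging construction: if `G` has at least three vertices of some odd
degree `d ≥ 3` (among them `x ≠ y`) and `2` belongs to the degree set of `G`,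
then there is a graph `G'` with the same size and degree set in which the number
of vertices of degree `d` drops by two, the number of vertices of degree `2`
increases, and all other degree counts are unchanged. -/
theorem merge_odd_degree_vertices {V : Type} [Fintype V] [DecidableEq V]
    (G : SimpleGraph V) [DecidableRel G.Adj] (d : ℕ) (hd3 : 3 ≤ d) (hodd : Odd d)
    (hcount : 3 ≤ (Finset.univ.filter fun v => G.degree v = d).card)
    (x y : V) (hxy : x ≠ y) (hx : G.degree x = d) (hy : G.degree y = d)
    (h2 : 2 ∈ Finset.univ.image (fun v => G.degree v)) :
    ∃ (p : ℕ) (G' : SimpleGraph (Fin p)) (inst : DecidableRel G'.Adj),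
      (@SimpleGraph.edgeFinset _ G' (@SimpleGraph.fintypeEdgeSet _ G' _ inst)).card
        = G.edgeFinset.card ∧
      Finset.univ.image (fun v => @SimpleGraph.degree _ G' v
        (@SimpleGraph.neighborSetFintype _ G' _ inst v))
        = Finset.univ.image (fun v => G.degree v) ∧
      (Finset.univ.filter fun v => @SimpleGraph.degree _ G' v
          (@SimpleGraph.neighborSetFintype _ G' _ inst v) = d).card
        = (Finset.univ.filter fun v => G.degree v = d).card - 2 ∧
      (Finset.univ.filter fun v => G.degree v = 2).card
        < (Finset.univ.filter fun v => @SimpleGraph.degree _ G' v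
            (@SimpleGraph.neighborSetFintype _ G' _ inst v) = 2).card ∧
      ∀ e : ℕ, e ≠ 2 → e ≠ d →
        (Finset.univ.filter fun v => @SimpleGraph.degree _ G' v
            (@SimpleGraph.neighborSetFintype _ G' _ inst v) = e).card
          = (Finset.univ.filter fun v => G.degree v = e).card :=
  merge_odd_degree_vertices_general G d hd3 hcount x y hxy hx hy h2
end
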